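/- Let Σ be a ranked alphabet and B=(B,⊕,⊗,0,1) a strong bimonoid. The following two statements are equivalent: (A) if Σ≠Σ^(0), then B is right-distributive, and if Σ≠Σ^(0)∪Σ^(1), then B is left-distributive; (B) for each (Σ,B)-weighted tree automaton 𝒜, ⟦𝒜⟧_run = ⟦𝒜⟧_init. In particular, if B is a semiring, then ⟦𝒜⟧_init=⟦𝒜⟧_run for each (Σ,B)-wta 𝒜. -/

import Mathlib

/-- A strong bimonoid: `(B,+,0)` a commutative monoid, `(B,*,1)` a monoid,
and `0` annihilating for `*`. -/
class StrongBimonoid (B : Type*) extends AddCommMonoid B, MonoidWithZero B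

section Defs

variable {B : Type*} [StrongBimonoid B]

/-- The closure `⟨A⟩_{⊕,⊗,0,1}` of a subset `A`: the smallest subset of `B`
containing `A ∪ {0,1}` and closed under `+` and `*`. -/
inductive SBClosure (A : Set B) : B → Prop
  | base {a : B} : a ∈ A → SBClosure A a
  | zero : SBClosure A 0
  | one : SBClosure A 1
  | add {a b : B} : SBClosure A a → SBClosure A b → SBClosure A (a + b)
  | mul {a b : B} : SBClosure A a → SBClosure A b → SBClosure A (a * b)

/-- `B` is locally finite if the closure of each finite subset is finite. -/
def SBLocallyFinite (B : Type*) [StrongBimonoid B] : Prop :=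
  ∀ A : Set B, A.Finite → {b : B | SBClosure A b}.Finite

/-- The weak closure `wcl(A)`: the smallest subset containing `A ∪ {0,1}` closed
under addition and under multiplication on the right by elements of `A`. -/
inductive WeakClosure (A : Set B) : B → Prop
  | base {a : B} : a ∈ A → WeakClosure A a
  | zero : WeakClosure A 0
  | one : WeakClosure A 1
  | add {b b' : B} : WeakClosure A b → WeakClosure A b' → WeakClosure A (b + b')
  | mulr {b a : B} : WeakClosure A b → a ∈ A → WeakClosure A (b * a)

/-- `B` is weakly locally finite if the weak closure of each finite subset is finite. -/
def WeaklyLocallyFinite (B : Type*) [StrongBimonoid B] : Prop :=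
  ∀ A : Set B, A.Finite → {b : B | WeakClosure A b}.Finite

/-- `B` is additively locally finite if each finitely generated submonoid of `(B,+,0)` is finite. -/
def AddLocallyFinite (B : Type*) [StrongBimonoid B] : Prop :=
  ∀ A : Set B, A.Finite → ((AddSubmonoid.closure A : AddSubmonoid B) : Set B).Finite

/-- `B` is multiplicatively locally finite if each finitely generated submonoid of `(B,*,1)` is finite. -/
def MulLocallyFinite (B : Type*) [StrongBimonoid B] : Prop :=
  ∀ A : Set B, A.Finite → ((Submonoid.closure A : Submonoid B) : Set B).Finite

/-- `B` is bi-locally finite if it is additively and multiplicatively locally finite. -/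
def BiLocallyFinite (B : Type*) [StrongBimonoid B] : Prop :=
  AddLocallyFinite B ∧ MulLocallyFinite B

/-- `B` is almost idempotent if `b + b + b = b + b` for all `b`. -/
def AlmostIdempotent (B : Type*) [StrongBimonoid B] : Prop :=
  ∀ b : B, b + b + b = b + b

/-- right-distributivity -/
def SBRightDistributive (B : Type*) [StrongBimonoid B] : Prop :=
  ∀ a b c : B, (a + b) * c = a * c + b * c

/-- left-distributivity -/
def SBLeftDistributive (B : Type*) [StrongBimonoid B] : Prop :=
  ∀ a b c : B, a * (b + c) = a * b + a * c

end Defs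

/-- A ranked alphabet: a finite nonempty set of symbols with a rank map,
having at least one nullary symbol. -/
structure RankedAlphabet where
  symb : Type
  fintype_symb : Fintype symb
  nonempty_symb : Nonempty symb
  rk : symb → ℕ
  exists_nullary : ∃ σ, rk σ = 0

attribute [instance] RankedAlphabet.fintype_symb RankedAlphabet.nonempty_symb

/-- Trees (ground terms) over a ranked alphabet. -/
inductive RTree (S : RankedAlphabet) : Type
  | node (σ : S.symb) (ts : Fin (S.rk σ) → RTree S) : RTree S

/-- A weighted tree automaton over the ranked alphabet `S` and the strong bimonoid `B`. -/
structure WTA (S : RankedAlphabet) (B : Type) [StrongBimonoid B] where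
  Q : Type
  fintypeQ : Fintype Q
  nonemptyQ : Nonempty Q
  δ : (σ : S.symb) → (Fin (S.rk σ) → Q) → Q → B
  F : Q → B

attribute [instance] WTA.fintypeQ WTA.nonemptyQ

variable {S : RankedAlphabet} {B : Type} [StrongBimonoid B]

/-- The vector `h_𝒜(t) ∈ B^Q`:
`h_𝒜(σ(t_1,…,t_k))_q = ⊕_{q_1⋯q_k ∈ Q^k} (⊗_i h_𝒜(t_i)_{q_i}) ⊗ δ_k(q_1⋯q_k,σ,q)`. -/
def WTA.h (M : WTA S B) : RTree S → M.Q → B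
  | .node σ ts => fun q =>
      ∑ qs : Fin (S.rk σ) → M.Q,
        (((List.finRange (S.rk σ)).map (fun i => M.h (ts i) (qs i))).prod) * M.δ σ qs q

/-- The initial algebra semantics `⟦𝒜⟧_init(t) = ⊕_{q ∈ Q} h_𝒜(t)_q ⊗ F_q`. -/
noncomputable def WTA.initSem (M : WTA S B) (t : RTree S) : B :=
  ∑ q, M.h t q * M.F q

/-- The positions of a tree (as lists of natural numbers). -/
def RTree.pos : RTree S → Finset (List ℕ)
  | .node _ ts =>
      insert [] (Finset.univ.biUnion fun i => ((ts i).pos).image (fun w => (i : ℕ) :: w))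

/-- The weight of a run `ρ` (given as a total map on positions) on a tree:
`wt(σ(t_1,…,t_k),ρ) = (⊗_i wt(t_i,ρ_i)) ⊗ δ_k(ρ(1)⋯ρ(k),σ,ρ(ε))`. -/
def WTA.wt (M : WTA S B) : RTree S → (List ℕ → M.Q) → B
  | .node σ ts => fun ρ =>
      (((List.finRange (S.rk σ)).map
          (fun i => M.wt (ts i) (fun w => ρ ((i : ℕ) :: w)))).prod)
        * M.δ σ (fun i => ρ [(i : ℕ)]) (ρ [])

/-- Extend a run, defined on the positions of `t`, to a total map on `List ℕ`. -/
noncomputable def WTA.extend (M : WTA S B) (t : RTree S) (ρ : ↑(t.pos) → M.Q) :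
    List ℕ → M.Q :=
  fun w => if h : w ∈ t.pos then ρ ⟨w, h⟩ else Classical.choice M.nonemptyQ

/-- The run semantics `⟦𝒜⟧_run(t) = ⊕_{ρ run of 𝒜 on t} wt(t,ρ) ⊗ F_{ρ(ε)}`. -/
noncomputable def WTA.runSem (M : WTA S B) (t : RTree S) : B :=
  ∑ ρ : (↑(t.pos) → M.Q), M.wt t (M.extend t ρ) * M.F (M.extend t ρ [])

/-!
Write `r_t(q)` for the sum of the weights of the runs on `t` with root state `q`. Cutting a run at
the root gives `r_{σ(t₁,…,t_k)}(q) = ⊕_{ρ₁,…,ρ_k} (⊗ᵢ wt(ρᵢ)) ⊗ δ(root ρ₁ ⋯ root ρ_k, σ, q)`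
without any distributivity, whereas `h_𝒜` first adds up the `r_{tᵢ}` and then multiplies.
Expanding a product of `k` sums needs both distributive laws once `k ≥ 2`, and pulling `δ` or `F`
out of a sum needs right distributivity once `k ≥ 1`; so under (A) we get `r_t = h_𝒜(t)` by
induction on `t`, and the two semantics agree.

Conversely, on `t = σ(t',…,t')` with `t' = σ(α,…,α)` one builds a wta whose initial algebra
semantics is `(c₀ ⋯ (b₁ ⊕ b₂) ⋯ c_{k-1}) ⊗ w` while its run semantics is
`(c₀ ⋯ b₁ ⋯ c_{k-1}) ⊗ w ⊕ (c₀ ⋯ b₂ ⋯ c_{k-1}) ⊗ w`. A hole in position `0` with all `cᵢ = 1`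
yields right distributivity; a hole in position `1` with `c₀ = x`, all other `cᵢ = 1` and
`w = 1` yields left distributivity.
-/

open Function

theorem SBRightDistributive.sum_mul (hR : SBRightDistributive B) {ι : Type*} (s : Finset ι)
    (f : ι → B) (c : B) : (∑ i ∈ s, f i) * c = ∑ i ∈ s, f i * c := by
  induction s using Finset.cons_induction with
  | empty => simp
  | cons a s ha ih => rw [Finset.sum_cons, Finset.sum_cons, hR, ih]

theorem SBLeftDistributive.mul_sum (hL : SBLeftDistributive B) {ι : Type*} (s : Finset ι)
    (f : ι → B) (c : B) : c * ∑ i ∈ s, f i = ∑ i ∈ s, c * f i := by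
  induction s using Finset.cons_induction with
  | empty => simp
  | cons a s ha ih => rw [Finset.sum_cons, Finset.sum_cons, hL, ih]

theorem sum_pi_fin_mul {k : ℕ} {α : Fin k → Type*} [∀ i, Fintype (α i)]
    (hR : 0 < k → SBRightDistributive B) (f : (∀ i, α i) → B) (c : B) :
    (∑ x, f x) * c = ∑ x, f x * c := by
  rcases Nat.eq_zero_or_pos k with rfl | hk
  · simp only [Fintype.sum_unique]
  · exact (hR hk).sum_mul _ _ _

theorem prod_finRange_ite_zero {k : ℕ} (p : Fin k → Prop) [DecidablePred p] (f : Fin k → B) :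
    ((List.finRange k).map fun i => if p i then f i else 0).prod
      = if ∀ i, p i then ((List.finRange k).map f).prod else 0 := by
  split_ifs with h
  · simp only [h, if_true]
  · obtain ⟨i, hi⟩ := not_forall.mp h
    exact List.prod_eq_zero (List.mem_map.mpr ⟨i, List.mem_finRange i, if_neg hi⟩)

theorem prod_finRange_sum {k : ℕ} (hk : 2 ≤ k → SBRightDistributive B ∧ SBLeftDistributive B)
    {α : Fin k → Type*} [∀ i, Fintype (α i)] (f : ∀ i, α i → B) :
    ((List.finRange k).map fun i => ∑ x, f i x).prod
      = ∑ x : (∀ i, α i), ((List.finRange k).map fun i => f i (x i)).prod := by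
  induction k with
  | zero => simp
  | succ k ih =>
    rw [← (Fin.consEquiv α).sum_comp, Fintype.sum_prod_type]
    simp only [List.finRange_succ, List.map_cons, List.prod_cons, List.map_map, comp_def,
      Fin.consEquiv_apply, Fin.cons_zero, Fin.cons_succ]
    rw [ih (fun h => hk (by omega)) (fun i => f i.succ)]
    rcases Nat.eq_zero_or_pos k with rfl | hk1
    · simp
    · rw [(hk (by omega)).1.sum_mul]
      exact Finset.sum_congr rfl fun x _ => (hk (by omega)).2.mul_sum _ _ _

theorem prod_finRange_update_one {k : ℕ} (j : Fin k) (v : B) :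
    ((List.finRange k).map (update 1 j v)).prod = v := by
  induction k with
  | zero => exact j.elim0
  | succ k ih =>
    rw [List.finRange_succ, List.map_cons, List.prod_cons, List.map_map]
    cases j using Fin.cases with
    | zero => simp [comp_def, Fin.succ_ne_zero]
    | succ j =>
      rw [update_of_ne (Fin.succ_ne_zero j).symm, Pi.one_apply, one_mul,
        update_comp_eq_of_injective _ (Fin.succ_injective k), Pi.one_comp]
      exact ih j

theorem prod_finRange_update_update_one {k : ℕ} (hk : 2 ≤ k) (x v : B) :
    ((List.finRange k).map (update (update 1 ⟨0, by omega⟩ x) ⟨1, hk⟩ v)).prod = x * v := by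
  obtain ⟨n, rfl⟩ : ∃ n, k = n + 2 := ⟨k - 2, by omega⟩
  have h0 : (⟨0, by omega⟩ : Fin (n + 2)) = 0 := rfl
  have h1 : (⟨1, hk⟩ : Fin (n + 2)) = Fin.succ 0 := rfl
  rw [h0, h1, List.finRange_succ, List.map_cons, List.prod_cons, List.map_map,
    update_comp_eq_of_injective _ (Fin.succ_injective _),
    update_comp_eq_of_forall_ne _ _ (Fin.succ_ne_zero), Pi.one_comp, prod_finRange_update_one,
    update_of_ne (Fin.succ_ne_zero 0).symm]
  exact congrArg (· * v) (update_self ..)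

theorem sum_pi_eq_sum_update {ι : Type*} [DecidableEq ι] [Fintype ι] {α : ι → Type*}
    [∀ i, Fintype (α i)] {M : Type*} [AddCommMonoid M] (f : (∀ i, α i) → M) (u : ∀ i, α i)
    (j : ι) (hf : ∀ x, (∃ i ≠ j, x i ≠ u i) → f x = 0) :
    ∑ x, f x = ∑ a, f (update u j a) := by
  classical
  rw [← Finset.sum_image fun a _ b _ h => update_injective u j h]
  refine (Finset.sum_subset (Finset.subset_univ _) fun x _ hx => hf x ?_).symm
  by_contra! hxu
  refine hx (Finset.mem_image.mpr ⟨x j, Finset.mem_univ _, funext fun i => ?_⟩)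
  rcases eq_or_ne i j with rfl | hij
  · exact update_self ..
  · rw [update_of_ne hij, hxu i hij]

namespace RTree

theorem nil_mem_pos (t : RTree S) : [] ∈ t.pos := by
  cases t
  simp [pos]

theorem cons_mem_pos_node {σ : S.symb} {ts : Fin (S.rk σ) → RTree S} (i : Fin (S.rk σ))
    {v : List ℕ} : (i : ℕ) :: v ∈ (node σ ts).pos ↔ v ∈ (ts i).pos := by
  simp [pos, Fin.val_inj]

theorem mem_pos_node {σ : S.symb} {ts : Fin (S.rk σ) → RTree S} {w : List ℕ} :
    w ∈ (node σ ts).pos ↔ w = [] ∨ ∃ i : Fin (S.rk σ), ∃ v ∈ (ts i).pos, w = (i : ℕ) :: v := by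
  simp [pos, eq_comm]

abbrev leaf (α : S.symb) (hα : S.rk α = 0) : RTree S :=
  .node α fun i => (Fin.cast hα i).elim0

end RTree

namespace WTA

open RTree

variable (M : WTA S B)

abbrev Run (t : RTree S) : Type := ↑t.pos → M.Q

noncomputable def root (t : RTree S) (ρ : M.Run t) : M.Q := M.extend t ρ []

noncomputable def runWt (t : RTree S) (ρ : M.Run t) : B := M.wt t (M.extend t ρ)

theorem runSem_eq_sum_runWt (t : RTree S) :
    M.runSem t = ∑ ρ : M.Run t, M.runWt t ρ * M.F (M.root t ρ) := rfl

theorem extend_of_mem {t : RTree S} (ρ : M.Run t) {w : List ℕ} (hw : w ∈ t.pos) :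
    M.extend t ρ w = ρ ⟨w, hw⟩ :=
  dif_pos hw

theorem wt_congr : ∀ (t : RTree S) {f g : List ℕ → M.Q}, (∀ w ∈ t.pos, f w = g w) →
    M.wt t f = M.wt t g
  | .node σ ts, f, g, hfg => by
    have hcons : ∀ (i : Fin (S.rk σ)) v, v ∈ (ts i).pos → f ((i : ℕ) :: v) = g ((i : ℕ) :: v) :=
      fun i v hv => hfg _ ((cons_mem_pos_node i).2 hv)
    simp only [wt]
    rw [hfg [] (nil_mem_pos _), funext fun i => hcons i [] (nil_mem_pos _)]
    congr 3
    exact funext fun i => wt_congr (ts i) (hcons i)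

noncomputable def graft (σ : S.symb) (ts : Fin (S.rk σ) → RTree S) (q : M.Q)
    (ρs : ∀ i, M.Run (ts i)) : List ℕ → M.Q
  | [] => q
  | i :: v => if h : i < S.rk σ then M.extend (ts ⟨i, h⟩) (ρs ⟨i, h⟩) v else q

noncomputable def runEquiv (σ : S.symb) (ts : Fin (S.rk σ) → RTree S) :
    M.Run (node σ ts) ≃ M.Q × ∀ i, M.Run (ts i) where
  toFun ρ := (M.root _ ρ, fun i v => ρ ⟨(i : ℕ) :: v.1, (cons_mem_pos_node i).2 v.2⟩)
  invFun p w := M.graft σ ts p.1 p.2 w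
  left_inv ρ := by
    funext ⟨w, hw⟩
    obtain rfl | ⟨i, v, hv, rfl⟩ := mem_pos_node.1 hw
    · exact M.extend_of_mem ρ hw
    · simp only [graft, i.isLt, dif_pos]
      exact M.extend_of_mem _ hv
  right_inv := by
    rintro ⟨q, ρs⟩
    refine Prod.ext (M.extend_of_mem (fun w => M.graft σ ts q ρs w.1) (nil_mem_pos _))
      (funext fun i => funext fun v => ?_)
    show M.graft σ ts q ρs ((i : ℕ) :: v.1) = ρs i v
    simp only [graft, i.isLt, dif_pos]
    exact M.extend_of_mem _ v.2

theorem root_eq_runEquiv_fst {σ : S.symb} {ts : Fin (S.rk σ) → RTree S}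
    (ρ : M.Run (node σ ts)) : M.root _ ρ = (M.runEquiv σ ts ρ).1 :=
  rfl

theorem runWt_node {σ : S.symb} {ts : Fin (S.rk σ) → RTree S} (ρ : M.Run (node σ ts)) :
    M.runWt _ ρ = ((List.finRange (S.rk σ)).map fun i =>
        M.runWt (ts i) ((M.runEquiv σ ts ρ).2 i)).prod
      * M.δ σ (fun i => M.root (ts i) ((M.runEquiv σ ts ρ).2 i)) (M.root _ ρ) := by
  have hcons : ∀ (i : Fin (S.rk σ)) v (hv : v ∈ (ts i).pos),
      M.extend _ ρ ((i : ℕ) :: v) = M.extend (ts i) ((M.runEquiv σ ts ρ).2 i) v := fun i v hv => by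
    rw [M.extend_of_mem _ ((cons_mem_pos_node i).2 hv), M.extend_of_mem _ hv]
    rfl
  simp only [runWt, root, wt]
  rw [funext fun i => hcons i [] (nil_mem_pos _)]
  congr 3
  exact funext fun i => M.wt_congr (ts i) (hcons i)

theorem sum_run_node {β : Type*} [AddCommMonoid β] {σ : S.symb} {ts : Fin (S.rk σ) → RTree S}
    (f : M.Run (node σ ts) → β) :
    ∑ ρ, f ρ = ∑ q, ∑ ρs : ∀ i, M.Run (ts i), f ((M.runEquiv σ ts).symm (q, ρs)) := by
  rw [← (M.runEquiv σ ts).symm.sum_comp, Fintype.sum_prod_type]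

open Classical in
noncomputable def runSum (t : RTree S) (q : M.Q) : B :=
  ∑ ρ : M.Run t, if M.root t ρ = q then M.runWt t ρ else 0

theorem runSum_node (σ : S.symb) (ts : Fin (S.rk σ) → RTree S) (q : M.Q) :
    M.runSum (node σ ts) q = ∑ ρs : ∀ i, M.Run (ts i),
      ((List.finRange (S.rk σ)).map fun i => M.runWt (ts i) (ρs i)).prod
        * M.δ σ (fun i => M.root (ts i) (ρs i)) q := by
  classical
  simp only [runSum, sum_run_node, root_eq_runEquiv_fst, runWt_node, Equiv.apply_symm_apply]
  rw [Finset.sum_comm]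
  simp

theorem runSem_node (σ : S.symb) (ts : Fin (S.rk σ) → RTree S)
    (hR : 0 < S.rk σ → SBRightDistributive B) :
    M.runSem (node σ ts) = ∑ q, M.runSum (node σ ts) q * M.F q := by
  simp only [runSem_eq_sum_runWt, sum_run_node, root_eq_runEquiv_fst, runWt_node,
    Equiv.apply_symm_apply, runSum_node, sum_pi_fin_mul hR]

open Classical in
theorem prod_runSum {σ : S.symb} (ts : Fin (S.rk σ) → RTree S)
    (hk : 2 ≤ S.rk σ → SBRightDistributive B ∧ SBLeftDistributive B) (qs : Fin (S.rk σ) → M.Q) :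
    ((List.finRange (S.rk σ)).map fun i => M.runSum (ts i) (qs i)).prod
      = ∑ ρs : ∀ i, M.Run (ts i), if (fun i => M.root (ts i) (ρs i)) = qs then
          ((List.finRange (S.rk σ)).map fun i => M.runWt (ts i) (ρs i)).prod else 0 := by
  simp only [runSum, prod_finRange_sum hk, prod_finRange_ite_zero, funext_iff]

theorem runSum_eq_h (hR : (∃ σ, S.rk σ ≠ 0) → SBRightDistributive B)
    (hL : (∃ σ, 2 ≤ S.rk σ) → SBLeftDistributive B) : ∀ t q, M.runSum t q = M.h t q
  | .node σ ts, q => by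
    classical
    have hRσ : 0 < S.rk σ → SBRightDistributive B := fun h => hR ⟨σ, h.ne'⟩
    have hk : 2 ≤ S.rk σ → SBRightDistributive B ∧ SBLeftDistributive B :=
      fun h => ⟨hRσ (by omega), hL ⟨σ, h⟩⟩
    calc M.runSum (node σ ts) q
        = ∑ ρs : ∀ i, M.Run (ts i), ∑ qs, if (fun i => M.root (ts i) (ρs i)) = qs then
            ((List.finRange (S.rk σ)).map fun i => M.runWt (ts i) (ρs i)).prod * M.δ σ qs q
            else 0 := by simp [runSum_node]
      _ = ∑ qs, ((List.finRange (S.rk σ)).map fun i => M.runSum (ts i) (qs i)).prod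
            * M.δ σ qs q := by
          simp only [prod_runSum _ _ hk, sum_pi_fin_mul hRσ, ite_mul, zero_mul]
          exact Finset.sum_comm
      _ = M.h (node σ ts) q := by simp only [runSum_eq_h hR hL _]; rfl

theorem runSem_eq_initSem_of_distrib (hR : (∃ σ, S.rk σ ≠ 0) → SBRightDistributive B)
    (hL : (∃ σ, 2 ≤ S.rk σ) → SBLeftDistributive B) : M.runSem = M.initSem := by
  funext ⟨σ, ts⟩
  rw [runSem_node _ _ _ fun h => hR ⟨σ, h.ne'⟩, initSem]
  simp only [runSum_eq_h M hR hL]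

theorem h_leaf {α : S.symb} (hα : S.rk α = 0) (l : Fin (S.rk α) → M.Q) (q : M.Q) :
    M.h (leaf α hα) q = M.δ α l q := by
  have : IsEmpty (Fin (S.rk α)) := ⟨fun i => (Fin.cast hα i).elim0⟩
  have hnil : List.finRange (S.rk α) = [] := by rw [hα]; rfl
  simp only [h, Fintype.sum_unique, hnil, List.map_nil, List.prod_nil, one_mul]
  congr 1
  exact Subsingleton.elim _ _

noncomputable def leafRunEquiv {α : S.symb} (hα : S.rk α = 0) : M.Run (leaf α hα) ≃ M.Q :=
  have : IsEmpty (Fin (S.rk α)) := ⟨fun i => (Fin.cast hα i).elim0⟩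
  (M.runEquiv α _).trans (Equiv.prodUnique _ _)

theorem runWt_leaf {α : S.symb} (hα : S.rk α = 0) (l : Fin (S.rk α) → M.Q)
    (ρ : M.Run (leaf α hα)) : M.runWt _ ρ = M.δ α l (M.leafRunEquiv hα ρ) := by
  have : IsEmpty (Fin (S.rk α)) := ⟨fun i => (Fin.cast hα i).elim0⟩
  have hnil : List.finRange (S.rk α) = [] := by rw [hα]; rfl
  rw [runWt_node, hnil, List.map_nil, List.prod_nil, one_mul]
  congr 1
  exact Subsingleton.elim _ _

noncomputable def heightOneRunEquiv (σ : S.symb) {α : S.symb} (hα : S.rk α = 0) :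
    M.Run (node σ fun _ => leaf α hα) ≃ M.Q × (Fin (S.rk σ) → M.Q) :=
  (M.runEquiv σ _).trans
    ((Equiv.refl _).prodCongr (Equiv.piCongrRight fun _ => M.leafRunEquiv hα))

theorem runWt_heightOne (σ : S.symb) {α : S.symb} (hα : S.rk α = 0) (l : Fin (S.rk α) → M.Q)
    (ρ : M.Run (node σ fun _ => leaf α hα)) :
    M.runWt _ ρ = ((List.finRange (S.rk σ)).map fun i =>
        M.δ α l ((M.heightOneRunEquiv σ hα ρ).2 i)).prod
      * M.δ σ (M.heightOneRunEquiv σ hα ρ).2 (M.heightOneRunEquiv σ hα ρ).1 := by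
  rw [runWt_node]
  simp only [runWt_leaf M hα l]
  rfl

end WTA

section ContextAutomaton

open RTree

variable {k : ℕ}

def ctxTrans (j : Fin k) (c : Fin k → B) (w b₁ b₂ : B) (l : Fin k → Option (Fin k)) :
    Option (Fin k) → B
  | none => if l = some then w else 0
  | some i =>
    if l = fun _ => none then update c j b₁ i
    else if l = fun _ => some j then (Pi.single j b₂ : Fin k → B) i else 0

theorem sum_ctxTrans_some (j : Fin k) (c : Fin k → B) (w b₁ b₂ : B) {β : Type*}
    [AddCommMonoid β] {G : B → β} (hG : G 0 = 0) (i : Fin k) :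
    ∑ l, G (ctxTrans j c w b₁ b₂ l (some i))
      = G (update c j b₁ i) + G ((Pi.single j b₂ : Fin k → B) i) := by
  have hne : (fun _ : Fin k => (none : Option (Fin k))) ≠ fun _ => some j :=
    fun h => by simpa using congrFun h j
  rw [Fintype.sum_eq_add _ _ hne fun l hl => by simp [ctxTrans, hl.1, hl.2, hG]]
  simp [ctxTrans, hne.symm]

theorem ctxTrans_some_eq_zero {j : Fin k} (c : Fin k → B) (w b₁ b₂ : B) {i : Fin k}
    (hij : i ≠ j) {l : Fin k → Option (Fin k)} (hl : l ≠ fun _ => none) :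
    ctxTrans j c w b₁ b₂ l (some i) = 0 := by
  simp [ctxTrans, hl, hij]

open Classical in
noncomputable def ctxδ (σ : S.symb) (j : Fin (S.rk σ)) (c : Fin (S.rk σ) → B) (w b₁ b₂ : B)
    (τ : S.symb) (l : Fin (S.rk τ) → Option (Fin (S.rk σ))) (q : Option (Fin (S.rk σ))) : B :=
  if h : τ = σ then ctxTrans j c w b₁ b₂ (h ▸ l) q else 1

/-- On `σ(t,…,t)` with `t = σ(α,…,α)`, the final state `none` asks for the `i`-th copy of `t` to
be in state `some i`. For `i ≠ j` this copy has a single run, of weight `c i`; the `j`-th copy has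
two runs (leaves all in `none`, or all in `some j`) of weights `b₁` and `b₂`. -/
noncomputable abbrev ctxWTA (σ : S.symb) (j : Fin (S.rk σ)) (c : Fin (S.rk σ) → B) (w b₁ b₂ : B) :
    WTA S B where
  Q := Option (Fin (S.rk σ))
  fintypeQ := inferInstance
  nonemptyQ := inferInstance
  δ := ctxδ σ j c w b₁ b₂
  F q := q.elim 1 fun _ => 0

end ContextAutomaton

section ContextSums

variable {k : ℕ} (j : Fin k) (c : Fin k → B) (w : B)

def fillHole (v : B) : B := ((List.finRange k).map (update c j v)).prod * w

theorem fillHole_zero : fillHole j c w 0 = 0 := by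
  rw [fillHole, List.prod_eq_zero (List.mem_map.2 ⟨j, List.mem_finRange j, update_self ..⟩),
    zero_mul]

variable (b₁ b₂ : B)

/-- What a run on the `i`-th subtree `σ(α,…,α)`, given by its root and leaf states, contributes
to a run of `ctxWTA` reaching the final state. -/
def childWt (i : Fin k) (a : Option (Fin k) × (Fin k → Option (Fin k))) : B :=
  if a.1 = some i then ctxTrans j c w b₁ b₂ a.2 a.1 else 0

theorem sum_prod_childWt :
    ∑ as : Fin k → Option (Fin k) × (Fin k → Option (Fin k)),
        ((List.finRange k).map fun i => childWt j c w b₁ b₂ i (as i)).prod * w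
      = fillHole j c w b₁ + fillHole j c w b₂ := by
  let u : Fin k → Option (Fin k) × (Fin k → Option (Fin k)) := fun i => (some i, fun _ => none)
  have hu : ∀ i ≠ j, ∀ a ≠ u i, childWt j c w b₁ b₂ i a = 0 := by
    rintro i hij ⟨q, l⟩ ha
    by_cases hq : q = some i
    · subst hq
      exact (if_pos rfl).trans (ctxTrans_some_eq_zero c w b₁ b₂ hij fun hl => ha (Prod.ext rfl hl))
    · exact if_neg hq
  -- only the `j`-th subtree has more than one run of nonzero weight
  rw [sum_pi_eq_sum_update _ u j fun as ⟨i, hij, hi⟩ => by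
    rw [List.prod_eq_zero (List.mem_map.2 ⟨i, List.mem_finRange i, hu i hij _ hi⟩), zero_mul]]
  have hfill : ∀ a, ((List.finRange k).map fun i => childWt j c w b₁ b₂ i (update u j a i)).prod
      * w = fillHole j c w (childWt j c w b₁ b₂ j a) := fun a => by
    rw [fillHole]
    congr 3
    funext i
    rcases eq_or_ne i j with rfl | hij
    · simp
    · simp [hij, u, childWt, ctxTrans]
  simp only [hfill]
  simp only [Fintype.sum_prod_type, childWt]
  rw [Fintype.sum_eq_single (some j) fun q hq => by simp [hq, fillHole_zero]]
  simp [sum_ctxTrans_some j c w b₁ b₂ (fillHole_zero j c w)]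

end ContextSums

section ContextAutomatonSemantics

open RTree WTA

variable (σ : S.symb) (j : Fin (S.rk σ)) (c : Fin (S.rk σ) → B) (w b₁ b₂ : B)
  {α : S.symb} (hα : S.rk α = 0)

theorem ctxδ_self (l : Fin (S.rk σ) → Option (Fin (S.rk σ))) (q : Option (Fin (S.rk σ))) :
    ctxδ σ j c w b₁ b₂ σ l q = ctxTrans j c w b₁ b₂ l q :=
  dif_pos rfl

include hα in
theorem ctxδ_leaf (l : Fin (S.rk α) → Option (Fin (S.rk σ))) (q : Option (Fin (S.rk σ))) :
    ctxδ σ j c w b₁ b₂ α l q = 1 :=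
  dif_neg fun h => by have := j.pos; rw [← h, hα] at this; omega

theorem ctxWTA_h_heightOne (i : Fin (S.rk σ)) :
    (ctxWTA σ j c w b₁ b₂).h (node σ fun _ => leaf α hα) (some i) = update c j (b₁ + b₂) i := by
  rw [WTA.h]
  simp only [h_leaf _ hα (fun i => (Fin.cast hα i).elim0), ctxδ_leaf σ j c w b₁ b₂ hα,
    ctxδ_self, List.prod_map_one, one_mul]
  refine (sum_ctxTrans_some j c w b₁ b₂ (G := id) rfl i).trans ?_
  rcases eq_or_ne i j with rfl | hij
  · simp
  · simp [hij]

theorem ctxWTA_initSem :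
    (ctxWTA σ j c w b₁ b₂).initSem (node σ fun _ => node σ fun _ => leaf α hα)
      = fillHole j c w (b₁ + b₂) := by
  rw [initSem, Fintype.sum_eq_single none fun q hq => by
    obtain ⟨i, rfl⟩ := Option.ne_none_iff_exists'.1 hq; exact mul_zero _, WTA.h]
  simp only [ctxδ_self, ctxTrans, mul_ite, mul_zero]
  rw [Fintype.sum_eq_single some fun qs hqs => if_neg hqs]
  simp [ctxWTA_h_heightOne, fillHole]

theorem ctxWTA_runSem :
    (ctxWTA σ j c w b₁ b₂).runSem (node σ fun _ => node σ fun _ => leaf α hα)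
      = fillHole j c w b₁ + fillHole j c w b₂ := by
  classical
  rw [runSem_eq_sum_runWt, sum_run_node, Fintype.sum_eq_single none fun q hq => by
    obtain ⟨i, rfl⟩ := Option.ne_none_iff_exists'.1 hq
    refine Finset.sum_eq_zero fun _ _ => ?_
    rw [root_eq_runEquiv_fst, Equiv.apply_symm_apply]
    exact mul_zero _]
  rw [← sum_prod_childWt j c w b₁ b₂]
  refine Fintype.sum_equiv (Equiv.piCongrRight fun _ => heightOneRunEquiv _ σ hα) _ _
    fun ρs => ?_
  simp only [root_eq_runEquiv_fst, runWt_node, Equiv.apply_symm_apply,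
    runWt_heightOne _ σ hα (fun i => (Fin.cast hα i).elim0), ctxδ_leaf σ j c w b₁ b₂ hα,
    ctxδ_self, List.prod_map_one, one_mul, Equiv.piCongrRight_apply, childWt,
    prod_finRange_ite_zero, ctxTrans, mul_ite, mul_zero, Option.elim_none, mul_one, Pi.map_apply,
    ite_mul, zero_mul, funext_iff]
  rfl

end ContextAutomatonSemantics

theorem fillHole_add_of_runSem_eq_initSem (H : ∀ M : WTA S B, M.runSem = M.initSem) (σ : S.symb)
    (j : Fin (S.rk σ)) (c : Fin (S.rk σ) → B) (w b₁ b₂ : B) :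
    fillHole j c w (b₁ + b₂) = fillHole j c w b₁ + fillHole j c w b₂ := by
  obtain ⟨α, hα⟩ := S.exists_nullary
  rw [← ctxWTA_initSem σ j c w b₁ b₂ hα, ← ctxWTA_runSem σ j c w b₁ b₂ hα, H]

theorem SBRightDistributive.of_runSem_eq_initSem (H : ∀ M : WTA S B, M.runSem = M.initSem)
    {σ : S.symb} (hσ : S.rk σ ≠ 0) : SBRightDistributive B := fun x y z => by
  simpa only [fillHole, prod_finRange_update_one] using
    fillHole_add_of_runSem_eq_initSem H σ ⟨0, Nat.pos_of_ne_zero hσ⟩ 1 z x y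

theorem SBLeftDistributive.of_runSem_eq_initSem (H : ∀ M : WTA S B, M.runSem = M.initSem)
    {σ : S.symb} (hσ : 2 ≤ S.rk σ) : SBLeftDistributive B := fun x y z => by
  simpa only [fillHole, prod_finRange_update_update_one hσ, mul_one] using
    fillHole_add_of_runSem_eq_initSem H σ ⟨1, hσ⟩ (update 1 ⟨0, by omega⟩ x) 1 y z

/-- The run semantics and the initial algebra semantics coincide for all wta over `Σ`
and `B` iff: `B` is right-distributive whenever `Σ` has a symbol of rank ≥ 1, and `B` is
left-distributive whenever `Σ` has a symbol of rank ≥ 2. In particular, if `B` is a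
semiring then both semantics coincide for every wta. -/
theorem statement6 (S : RankedAlphabet) (B : Type) [StrongBimonoid B] :
    ((((∃ σ, S.rk σ ≠ 0) → SBRightDistributive B) ∧
      ((∃ σ, 2 ≤ S.rk σ) → SBLeftDistributive B)) ↔
      (∀ M : WTA S B, M.runSem = M.initSem)) ∧
    (SBLeftDistributive B → SBRightDistributive B →
      ∀ M : WTA S B, M.initSem = M.runSem) := by
  refine ⟨⟨fun ⟨hR, hL⟩ M => M.runSem_eq_initSem_of_distrib hR hL, fun H => ⟨?_, ?_⟩⟩,
    fun hL hR M => (M.runSem_eq_initSem_of_distrib (fun _ => hR) fun _ => hL).symm⟩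
  · rintro ⟨σ, hσ⟩
    exact .of_runSem_eq_initSem H hσ
  · rintro ⟨σ, hσ⟩
    exact .of_runSem_eq_initSem H hσ
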